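/- Let Γ be a countable group, μ a probability measure on Γ whose support generates Γ, and d(·,·) a left-invariant metric on Γ. Suppose that: the entropy H(μ) is finite; μ has finite first moment with respect to d, i.e. Σ_{x∈Γ} μ(x) d(e, x) < ∞; and the logarithmic volume growth v = limsup_{n→∞} ln(#{x ∈ Γ : d(e,x) ≤ n})/n is finite. Then the asymptotic entropy h, the rate of escape ℓ = lim_n d(e, Z_n)/n (a.s. and L¹ limit), and v satisfy the fundamental inequality h ≤ ℓ · v. -/

import Mathlib

open MeasureTheory ProbabilityTheory Filter
open scoped ENNReal

noncomputable section

variable {Γ Ω : Type*}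

/-- Position at time `n` of the random walk started at `x` with i.i.d. increments
`X 0, X 1, …` : `Z_n = x * X_0 * X_1 * ⋯ * X_{n-1}` (ordered product). -/
def walk [Group Γ] (x : Γ) (X : ℕ → Ω → Γ) (n : ℕ) (ω : Ω) : Γ :=
  x * ((List.range n).map fun k => X k ω).prod

/-- Hitting probability `F(x,y) = ℙ^x[∃ n ≥ 0, Z_n = y]`. -/
def hitProb [Group Γ] [MeasurableSpace Ω] (P : Measure Ω) (X : ℕ → Ω → Γ) (x y : Γ) : ℝ≥0∞ :=
  P {ω | ∃ n : ℕ, walk x X n ω = y}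

/-- Green metric `d_G(x,y) = -ln F(x,y)`. -/
def greenDist [Group Γ] [MeasurableSpace Ω] (P : Measure Ω) (X : ℕ → Ω → Γ) (x y : Γ) : ℝ :=
  - Real.log (hitProb P X x y).toReal

/-- Green function `G(x,y) = Σ_{n≥0} ℙ^x[Z_n = y]`. -/
def greenFn [Group Γ] [MeasurableSpace Ω] (P : Measure Ω) (X : ℕ → Ω → Γ) (x y : Γ) : ℝ≥0∞ :=
  ∑' n : ℕ, P {ω | walk x X n ω = y}

/-- Martin kernel `K(x,y) = G(x,y)/G(e,y)` (real-valued; `G` is finite by transience). -/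
def martinK [Group Γ] [MeasurableSpace Ω] (P : Measure Ω) (X : ℕ → Ω → Γ) (x y : Γ) : ℝ :=
  (greenFn P X x y).toReal / (greenFn P X 1 y).toReal

/-- Word ball of radius `n` for the generating set `S` : elements expressible as a
product of at most `n` generators. -/
def wordBall [Group Γ] (S : Finset Γ) (n : ℕ) : Set Γ :=
  {x | ∃ l : List Γ, l.length ≤ n ∧ (∀ g ∈ l, g ∈ (S : Set Γ)) ∧ l.prod = x}

/-! With probability tending to one, `Z_n` lies in the ball of radius `(ℓ + ε) n` at a point of
mass at most `e^{-(h - ε) n}`. There are at most `e^{(v + ε)((ℓ + ε) n + 1)}` such points, so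
their total mass, which is eventually at least `1/2`, is at most
`e^{((v + ε)(ℓ + ε) - (h - ε)) n + O(1)}`; hence `h - ε ≤ (v + ε)(ℓ + ε)` for every `ε > 0`. -/

open Topology

theorem walk_zero [Group Γ] (x : Γ) (X : ℕ → Ω → Γ) : walk x X 0 = fun _ => x := by
  ext; simp [walk]

theorem walk_succ [Group Γ] (x : Γ) (X : ℕ → Ω → Γ) (n : ℕ) :
    walk x X (n + 1) = walk x X n * X n := by
  ext; simp [walk, List.range_succ, mul_assoc]

theorem measurable_walk [Group Γ] [MeasurableSpace Γ] [MeasurableMul₂ Γ] [MeasurableSpace Ω]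
    (x : Γ) {X : ℕ → Ω → Γ} (hX : ∀ k, Measurable (X k)) (n : ℕ) :
    Measurable (walk x X n) := by
  induction n with
  | zero => rw [walk_zero]; exact measurable_const
  | succ n ih => rw [walk_succ]; exact ih.mul (hX n)

theorem Real.nonpos_of_eventually_mul_natCast_le {a b : ℝ} (h : ∀ᶠ n : ℕ in atTop, a * n ≤ b) :
    a ≤ 0 := by
  by_contra! ha
  have hlarge := (tendsto_natCast_atTop_atTop.const_mul_atTop ha).eventually_gt_atTop b
  obtain ⟨n, hle, hgt⟩ := (h.and hlarge).exists
  exact hle.not_gt hgt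

theorem eventually_natCast_le_exp_of_limsup_lt {c : ℕ → ℕ} {w : ℝ}
    (hbdd : IsBoundedUnder (· ≤ ·) atTop fun k : ℕ => Real.log (c k) / k)
    (hw : limsup (fun k : ℕ => Real.log (c k) / k) atTop < w) :
    ∀ᶠ k : ℕ in atTop, (c k : ℝ) ≤ Real.exp (w * k) := by
  filter_upwards [eventually_lt_of_limsup_lt hw hbdd, eventually_gt_atTop 0] with k hk hk0
  have hlog : Real.log (c k) < w * k := (div_lt_iff₀ (by exact_mod_cast hk0)).1 hk
  exact (Real.le_exp_log _).trans (Real.exp_le_exp.2 hlog.le)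

theorem limsup_log_natCast_div_nonneg {c : ℕ → ℕ}
    (hbdd : IsBoundedUnder (· ≤ ·) atTop fun k : ℕ => Real.log (c k) / k) :
    0 ≤ limsup (fun k : ℕ => Real.log (c k) / k) atTop :=
  le_limsup_of_frequently_le
    (Frequently.of_forall fun k => div_nonneg (Real.log_natCast_nonneg _) k.cast_nonneg) hbdd

theorem MeasureTheory.measureReal_le_ncard_mul {α : Type*} [MeasurableSpace α]
    [MeasurableSingletonClass α] (ν : Measure α) [IsFiniteMeasure ν] {T : Set α}
    (hT : T.Finite) {p : ℝ} (hp : ∀ x ∈ T, ν.real {x} ≤ p) : ν.real T ≤ T.ncard * p := by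
  rw [← hT.coe_toFinset, ← sum_measureReal_singleton, Set.ncard_coe_finset, ← nsmul_eq_mul]
  exact Finset.sum_le_card_nsmul _ _ _ fun x hx => hp x (hT.mem_toFinset.1 hx)

section Typical

variable {α : Type*} [MeasurableSpace Ω] [MeasurableSpace α] [MeasurableSingletonClass α]

def typicalSet (P : Measure Ω) (Z : ℕ → Ω → α) (N : α → ℝ) (r s : ℝ) (n : ℕ) : Set α :=
  {x | N x ≤ r * n ∧ (P.map (Z n)).real {x} ≤ Real.exp (-(s * n))}

variable {P : Measure Ω} [IsProbabilityMeasure P] {Z : ℕ → Ω → α} {N : α → ℝ}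

theorem measureReal_typicalSet_le (hfin : ∀ k : ℕ, {x | N x ≤ k}.Finite) (r s : ℝ) (n : ℕ) :
    (P.map (Z n)).real (typicalSet P Z N r s n) ≤
      Nat.card {x | N x ≤ (⌈r * n⌉₊ : ℝ)} * Real.exp (-(s * n)) := by
  have hsub : typicalSet P Z N r s n ⊆ {x | N x ≤ (⌈r * n⌉₊ : ℝ)} :=
    fun x hx => hx.1.trans (Nat.le_ceil _)
  calc (P.map (Z n)).real (typicalSet P Z N r s n)
      ≤ (typicalSet P Z N r s n).ncard * Real.exp (-(s * n)) :=
        measureReal_le_ncard_mul _ ((hfin _).subset hsub) fun x hx => hx.2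
    _ ≤ Nat.card {x | N x ≤ (⌈r * n⌉₊ : ℝ)} * Real.exp (-(s * n)) := by
        rw [Nat.card_coe_set_eq]
        gcongr
        exact hfin _

theorem tendsto_measureReal_preimage_typicalSet [Countable α] (hZ : ∀ n, Measurable (Z n))
    {l h r s : ℝ}
    (hl : ∀ᵐ ω ∂P, Tendsto (fun n : ℕ => N (Z n ω) / n) atTop (𝓝 l))
    (hh : ∀ᵐ ω ∂P, Tendsto (fun n : ℕ => -Real.log ((P.map (Z n)).real {Z n ω}) / n)
      atTop (𝓝 h))
    (hr : l < r) (hs : s < h) :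
    Tendsto (fun n => P.real (Z n ⁻¹' typicalSet P Z N r s n)) atTop (𝓝 1) := by
  have htyp : ∀ᵐ ω ∂P, ∀ᶠ n in atTop, Z n ω ∈ typicalSet P Z N r s n := by
    filter_upwards [hl, hh] with ω hlω hhω
    filter_upwards [hlω.eventually_le_const hr, hhω.eventually_const_le hs,
      eventually_gt_atTop 0] with n hN hlog hn
    have hn : (0 : ℝ) < n := by exact_mod_cast hn
    refine ⟨(div_le_iff₀ hn).1 hN, (Real.le_exp_log _).trans (Real.exp_le_exp.2 ?_)⟩
    linarith [(le_div_iff₀ hn).1 hlog]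
  have hmeas := tendsto_measure_of_ae_tendsto_indicator_of_isFiniteMeasure atTop
    (As := fun n => Z n ⁻¹' typicalSet P Z N r s n) MeasurableSet.univ
    (fun n => (hZ n) (Set.to_countable _).measurableSet)
    (htyp.mono fun ω hω => hω.mono fun n hn => iff_of_true hn trivial)
  rw [measure_univ] at hmeas
  exact (ENNReal.tendsto_toReal ENNReal.one_ne_top).comp hmeas

end Typical

section FundamentalInequality

variable {α : Type*} [MeasurableSpace Ω] [MeasurableSpace α] [Countable α]
  [MeasurableSingletonClass α] {P : Measure Ω} [IsProbabilityMeasure P] {Z : ℕ → Ω → α}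
  {N : α → ℝ} {l h : ℝ}

theorem le_mul_of_typicalSet (hZ : ∀ n, Measurable (Z n))
    (hfin : ∀ k : ℕ, {x | N x ≤ k}.Finite)
    (hbdd : IsBoundedUnder (· ≤ ·) atTop
      fun k : ℕ => Real.log (Nat.card {x | N x ≤ (k : ℝ)}) / k)
    (hl : ∀ᵐ ω ∂P, Tendsto (fun n : ℕ => N (Z n ω) / n) atTop (𝓝 l))
    (hh : ∀ᵐ ω ∂P, Tendsto (fun n : ℕ => -Real.log ((P.map (Z n)).real {Z n ω}) / n)
      atTop (𝓝 h))
    {r s w : ℝ} (hr : l < r) (hr0 : 0 < r) (hs : s < h) (hw0 : 0 ≤ w)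
    (hw : limsup (fun k : ℕ => Real.log (Nat.card {x | N x ≤ (k : ℝ)}) / k) atTop < w) :
    s ≤ w * r := by
  have hceil : Tendsto (fun n : ℕ => ⌈r * n⌉₊) atTop atTop :=
    tendsto_nat_ceil_atTop.comp (tendsto_natCast_atTop_atTop.const_mul_atTop hr0)
  have hvol := hceil.eventually (eventually_natCast_le_exp_of_limsup_lt hbdd hw)
  have hprob := (tendsto_measureReal_preimage_typicalSet hZ hl hh hr hs).eventually_const_lt
    (by norm_num : (1 / 2 : ℝ) < 1)
  refine sub_nonpos.1 (Real.nonpos_of_eventually_mul_natCast_le (b := Real.log 2 + w) ?_)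
  filter_upwards [hvol, hprob] with n hc hP
  have hrn : r * n ≤ ⌈r * n⌉₊ ∧ (⌈r * n⌉₊ : ℝ) < r * n + 1 :=
    ⟨Nat.le_ceil _, Nat.ceil_lt_add_one (by positivity)⟩
  have hhalf : (1 / 2 : ℝ) < Real.exp ((w * r - s) * n + w) := calc
    1 / 2 < P.real (Z n ⁻¹' typicalSet P Z N r s n) := hP
    _ = (P.map (Z n)).real (typicalSet P Z N r s n) :=
        (map_measureReal_apply (hZ n) (Set.to_countable _).measurableSet).symm
    _ ≤ Nat.card {x | N x ≤ (⌈r * n⌉₊ : ℝ)} * Real.exp (-(s * n)) :=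
        measureReal_typicalSet_le hfin r s n
    _ ≤ Real.exp (w * ⌈r * n⌉₊) * Real.exp (-(s * n)) := by gcongr
    _ ≤ Real.exp ((w * r - s) * n + w) := by
        rw [← Real.exp_add]
        exact Real.exp_le_exp.2 (by nlinarith)
  have hlog := Real.log_lt_log (by norm_num) hhalf
  rw [Real.log_exp, one_div, Real.log_inv] at hlog
  linarith

theorem le_mul_limsup_log_card_div (hZ : ∀ n, Measurable (Z n)) (hN : ∀ x, 0 ≤ N x)
    (hfin : ∀ k : ℕ, {x | N x ≤ k}.Finite)
    (hbdd : IsBoundedUnder (· ≤ ·) atTop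
      fun k : ℕ => Real.log (Nat.card {x | N x ≤ (k : ℝ)}) / k)
    (hl : ∀ᵐ ω ∂P, Tendsto (fun n : ℕ => N (Z n ω) / n) atTop (𝓝 l))
    (hh : ∀ᵐ ω ∂P, Tendsto (fun n : ℕ => -Real.log ((P.map (Z n)).real {Z n ω}) / n)
      atTop (𝓝 h)) :
    h ≤ l * limsup (fun k : ℕ => Real.log (Nat.card {x | N x ≤ (k : ℝ)}) / k) atTop := by
  set v := limsup (fun k : ℕ => Real.log (Nat.card {x | N x ≤ (k : ℝ)}) / k) atTop
  have hl0 : 0 ≤ l := by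
    obtain ⟨ω, hω⟩ := hl.exists
    exact ge_of_tendsto' hω fun n => div_nonneg (hN _) n.cast_nonneg
  have hv0 : 0 ≤ v := limsup_log_natCast_div_nonneg hbdd
  have key : ∀ ε > 0, h - ε ≤ (v + ε) * (l + ε) := fun ε hε =>
    le_mul_of_typicalSet hZ hfin hbdd hl hh (by linarith) (by linarith) (by linarith)
      (by linarith) (by linarith)
  have hcont : Tendsto (fun ε : ℝ => (v + ε) * (l + ε) + ε) (𝓝[>] 0) (𝓝 (l * v)) := by
    have : Continuous fun ε : ℝ => (v + ε) * (l + ε) + ε := by fun_prop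
    simpa [mul_comm] using this.continuousWithinAt.tendsto (x := 0) (s := Set.Ioi 0)
  exact ge_of_tendsto hcont (eventually_nhdsWithin_of_forall fun ε hε => by linarith [key ε hε])

end FundamentalInequality

theorem fundamental_inequality_general
    [Group Γ] [Countable Γ] [MeasurableSpace Γ] [MeasurableSingletonClass Γ]
    [MeasurableSpace Ω] (P : Measure Ω) [IsProbabilityMeasure P]
    (X : ℕ → Ω → Γ) (hmeas : ∀ k, Measurable (X k))
    (d : Γ → Γ → ℝ)
    (hd0 : ∀ x y, 0 ≤ d x y)
    (hballfin : ∀ n : ℕ, {x : Γ | d 1 x ≤ (n : ℝ)}.Finite)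
    (v : ℝ)
    (hbdd : IsBoundedUnder (· ≤ ·) atTop
      (fun n : ℕ => Real.log (Nat.card {x : Γ | d 1 x ≤ (n : ℝ)}) / n))
    (hv : Filter.limsup
      (fun n : ℕ => Real.log (Nat.card {x : Γ | d 1 x ≤ (n : ℝ)}) / n) atTop = v) :
    ∀ l h : ℝ,
      (∀ᵐ ω ∂P, Tendsto (fun n : ℕ => d 1 (walk 1 X n ω) / n) atTop (nhds l)) →
      (∀ᵐ ω ∂P, Tendsto (fun n : ℕ =>
          (- Real.log ((Measure.map (walk 1 X n) P) {walk 1 X n ω}).toReal) / n)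
        atTop (nhds h)) →
      h ≤ l * v := by
  intro l h hl hh
  rw [← hv]
  exact le_mul_limsup_log_card_div (measurable_walk 1 hmeas) (hd0 1) hballfin hbdd hl hh

/-- the fundamental inequality `h ≤ ℓ · v` for any left-invariant
metric `d` with finite first moment, assuming finite entropy and finite
logarithmic volume growth `v`. -/
theorem fundamental_inequality
    [Group Γ] [Countable Γ] [MeasurableSpace Γ] [MeasurableSingletonClass Γ]
    [MeasurableSpace Ω] (P : Measure Ω) [IsProbabilityMeasure P]
    (μ : Measure Γ) [IsProbabilityMeasure μ]
    (X : ℕ → Ω → Γ) (hmeas : ∀ k, Measurable (X k))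
    (hiid : iIndepFun X P)
    (hlaw : ∀ k, Measure.map (X k) P = μ)
    (hgen : Subgroup.closure {g : Γ | μ {g} ≠ 0} = ⊤)
    (d : Γ → Γ → ℝ)
    (hd0 : ∀ x y, 0 ≤ d x y) (hdiag : ∀ x, d x x = 0)
    (hsep : ∀ x y, d x y = 0 → d y x = 0 → x = y)
    (htri : ∀ x y z, d x z ≤ d x y + d y z)
    (hinv : ∀ g x y, d (g * x) (g * y) = d x y)
    (hent : Summable fun g : Γ => Real.negMulLog (μ {g}).toReal)
    (hmom : Summable fun g : Γ => (μ {g}).toReal * d 1 g)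
    (hballfin : ∀ n : ℕ, {x : Γ | d 1 x ≤ (n : ℝ)}.Finite)
    (v : ℝ)
    (hbdd : IsBoundedUnder (· ≤ ·) atTop
      (fun n : ℕ => Real.log (Nat.card {x : Γ | d 1 x ≤ (n : ℝ)}) / n))
    (hv : Filter.limsup
      (fun n : ℕ => Real.log (Nat.card {x : Γ | d 1 x ≤ (n : ℝ)}) / n) atTop = v) :
    ∀ l h : ℝ,
      (∀ᵐ ω ∂P, Tendsto (fun n : ℕ => d 1 (walk 1 X n ω) / n) atTop (nhds l)) →
      (∀ᵐ ω ∂P, Tendsto (fun n : ℕ =>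
          (- Real.log ((Measure.map (walk 1 X n) P) {walk 1 X n ω}).toReal) / n)
        atTop (nhds h)) →
      h ≤ l * v :=
  fundamental_inequality_general P X hmeas d hd0 hballfin v hbdd hv
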